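/- arXiv:2604.26396 — 2 statements merged into one kernel-verified Lean document; each statement's English description precedes it below -/
import Mathlib

section
/- For every positive integer r and every y ∈ [0,1], ∫_0^1 g(x,y) · √2 cos(πrx) dx = (√3/(π²r²)) · √2 cos(πry), i.e., ψ_r(x) = √2 cos(πrx) is an eigenfunction of the integral operator with kernel g, with eigenvalue λ_r = √3/(π²r²). -/
open Real

/-- The kernel of Hoeffding's D: g(x,y) = (√3/6)(3x² + 3y² - 6 max(x,y) + 2). -/
noncomputable def hoeffdingG (x y : ℝ) : ℝ :=
  (Real.sqrt 3 / 6) * (3 * x ^ 2 + 3 * y ^ 2 - 6 * max x y + 2)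

lemma hoeffding_antideriv (a b p c : ℝ) (ha : a ≠ 0) (x : ℝ) :
    HasDerivAt (fun x : ℝ => c * ((3*x^2 + b*x + p) * Real.sin (a*x) / a
        + (6*x + b) * Real.cos (a*x) / a^2 - 6 * Real.sin (a*x) / a^3))
      (c * ((3*x^2 + b*x + p) * Real.cos (a*x))) x := by
  have hs : HasDerivAt (fun x : ℝ => Real.sin (a*x)) (Real.cos (a*x) * a) x := by
    simpa [Function.comp_def] using (Real.hasDerivAt_sin (a*x)).comp x ((hasDerivAt_id x).const_mul a)
  have hc : HasDerivAt (fun x : ℝ => Real.cos (a*x)) (-Real.sin (a*x) * a) x := by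
    simpa [Function.comp_def] using (Real.hasDerivAt_cos (a*x)).comp x ((hasDerivAt_id x).const_mul a)
  have hp : HasDerivAt (fun x : ℝ => 3*x^2 + b*x + p) (6*x + b) x := by
    have h1 : HasDerivAt (fun x : ℝ => x^2) (2*x) x := by
      simpa using hasDerivAt_pow 2 x
    have := ((h1.const_mul 3).add ((hasDerivAt_id x).const_mul b)).add_const p
    exact this.congr_deriv (by ring)
  have hq : HasDerivAt (fun x : ℝ => 6*x + b) 6 x := by
    simpa using ((hasDerivAt_id x).const_mul 6).add_const b
  have h := (((hp.mul hs).div_const a).add (((hq.mul hc)).div_const (a^2))).sub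
      ((hs.const_mul 6).div_const (a^3))
  have h2 := h.const_mul c
  refine h2.congr_deriv ?_
  field_simp
  ring

/-- ψ_r(x) = √2 cos(πrx) is an eigenfunction of the integral operator with kernel g,
    with eigenvalue λ_r = √3/(π²r²). -/
theorem hoeffdingG_eigenfunction (r : ℕ) (hr : 1 ≤ r) (y : ℝ)
    (hy : y ∈ Set.Icc (0 : ℝ) 1) :
    ∫ x in (0 : ℝ)..1, hoeffdingG x y * (Real.sqrt 2 * Real.cos (π * (r : ℝ) * x))
      = (Real.sqrt 3 / (π ^ 2 * (r : ℝ) ^ 2)) * (Real.sqrt 2 * Real.cos (π * (r : ℝ) * y)) := by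
  obtain ⟨hy0, hy1⟩ := hy
  set a : ℝ := π * (r : ℝ) with ha_def
  have hr' : (0 : ℝ) < (r : ℝ) := by exact_mod_cast hr
  have ha : a ≠ 0 := by positivity
  set c : ℝ := Real.sqrt 3 / 6 * Real.sqrt 2 with hc_def
  have hcont : Continuous fun x : ℝ => hoeffdingG x y * (Real.sqrt 2 * Real.cos (a * x)) := by
    unfold hoeffdingG; fun_prop
  have hint1 : IntervalIntegrable (fun x : ℝ => hoeffdingG x y * (Real.sqrt 2 * Real.cos (a * x)))
      MeasureTheory.volume 0 y := hcont.intervalIntegrable _ _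
  have hint2 : IntervalIntegrable (fun x : ℝ => hoeffdingG x y * (Real.sqrt 2 * Real.cos (a * x)))
      MeasureTheory.volume y 1 := hcont.intervalIntegrable _ _
  have hsplit := intervalIntegral.integral_add_adjacent_intervals hint1 hint2
  -- compute the first piece
  have hI1 : (∫ x in (0:ℝ)..y, hoeffdingG x y * (Real.sqrt 2 * Real.cos (a * x)))
      = ∫ x in (0:ℝ)..y, c * ((3*x^2 + 0*x + (3*y^2 - 6*y + 2)) * Real.cos (a*x)) := by
    apply intervalIntegral.integral_congr
    intro x hx
    rw [Set.uIcc_of_le hy0] at hx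
    have hmax : max x y = y := max_eq_right hx.2
    unfold hoeffdingG
    simp only [hmax]; ring
  have hI2 : (∫ x in y..(1:ℝ), hoeffdingG x y * (Real.sqrt 2 * Real.cos (a * x)))
      = ∫ x in y..(1:ℝ), c * ((3*x^2 + (-6)*x + (3*y^2 + 2)) * Real.cos (a*x)) := by
    apply intervalIntegral.integral_congr
    intro x hx
    rw [Set.uIcc_of_le hy1] at hx
    have hmax : max x y = x := max_eq_left hx.1
    unfold hoeffdingG
    simp only [hmax]; ring
  have hderivcont : ∀ b p : ℝ, Continuous fun x : ℝ =>
      c * ((3*x^2 + b*x + p) * Real.cos (a*x)) := by intro b p; fun_prop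
  have hval1 := intervalIntegral.integral_eq_sub_of_hasDerivAt
      (f := fun x : ℝ => c * ((3*x^2 + 0*x + (3*y^2 - 6*y + 2)) * Real.sin (a*x) / a
        + (6*x + 0) * Real.cos (a*x) / a^2 - 6 * Real.sin (a*x) / a^3))
      (f' := fun x : ℝ => c * ((3*x^2 + 0*x + (3*y^2 - 6*y + 2)) * Real.cos (a*x)))
      (a := 0) (b := y)
      (fun x _ => hoeffding_antideriv a 0 (3*y^2 - 6*y + 2) c ha x)
      ((hderivcont 0 _).intervalIntegrable _ _)
  have hval2 := intervalIntegral.integral_eq_sub_of_hasDerivAt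
      (f := fun x : ℝ => c * ((3*x^2 + (-6)*x + (3*y^2 + 2)) * Real.sin (a*x) / a
        + (6*x + (-6)) * Real.cos (a*x) / a^2 - 6 * Real.sin (a*x) / a^3))
      (f' := fun x : ℝ => c * ((3*x^2 + (-6)*x + (3*y^2 + 2)) * Real.cos (a*x)))
      (a := y) (b := 1)
      (fun x _ => hoeffding_antideriv a (-6) (3*y^2 + 2) c ha x)
      ((hderivcont (-6) _).intervalIntegrable _ _)
  have hsin : Real.sin (a * 1) = 0 := by
    rw [mul_one, ha_def, mul_comm]
    exact Real.sin_nat_mul_pi r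
  rw [← hsplit, hI1, hI2, hval1, hval2]
  have h30 : Real.sin (a * 0) = 0 := by rw [mul_zero, Real.sin_zero]
  simp only [hsin, h30]
  have hc3 : c = Real.sqrt 3 / 6 * Real.sqrt 2 := hc_def
  have hpi : π ≠ 0 := Real.pi_ne_zero
  have hrne : (r : ℝ) ≠ 0 := ne_of_gt hr'
  field_simp [ha_def]
  ring
end

section
/- Let A be a p×p Hermitian matrix (p ≥ 2), let A_k be obtained by deleting the k-th row and column, and let z ∈ ℂ with v = Im z > 0. Then |tr((A - zI_p)^{-1}) - tr((A_k - zI_{p-1})^{-1})| ≤ 1/v. -/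
set_option linter.unusedSectionVars false
set_option linter.unusedVariables false
set_option maxHeartbeats 1600000
open Matrix

variable {m : Type*} [Fintype m] [DecidableEq m]

/-- quadratic form of a Hermitian matrix is self-conjugate -/
lemma herm_quad_conj {B : Matrix m m ℂ} (hB : B.IsHermitian) (v : m → ℂ) :
    (starRingEnd ℂ) (star v ⬝ᵥ B.mulVec v) = star v ⬝ᵥ B.mulVec v := by
  have : (starRingEnd ℂ) (star v ⬝ᵥ B.mulVec v) = star (star v ⬝ᵥ B.mulVec v) := rfl
  rw [this, ← star_dotProduct_star, star_star, star_mulVec, hB.eq,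
    dotProduct_mulVec]

lemma dot_self_re_nonneg (v : m → ℂ) : 0 ≤ (star v ⬝ᵥ v).re ∧ (star v ⬝ᵥ v).im = 0 := by
  constructor
  · simp only [dotProduct, Complex.re_sum]
    apply Finset.sum_nonneg
    intro i _
    simp only [Pi.star_apply, RCLike.star_def, Complex.mul_re, Complex.conj_re,
      Complex.conj_im]
    nlinarith [sq_nonneg (v i).re, sq_nonneg (v i).im]
  · simp only [dotProduct, Complex.im_sum]
    apply Finset.sum_eq_zero
    intro i _
    simp only [Pi.star_apply, RCLike.star_def, Complex.mul_im, Complex.conj_re,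
      Complex.conj_im]
    ring

lemma dot_self_pos {v : m → ℂ} (hv : v ≠ 0) : 0 < (star v ⬝ᵥ v).re := by
  obtain ⟨i, hi⟩ := Function.ne_iff.mp hv
  have : (star v ⬝ᵥ v).re = ∑ j, Complex.normSq (v j) := by
    simp [dotProduct, Complex.re_sum, Pi.star_apply, ← Complex.normSq_eq_conj_mul_self]
  rw [this]
  apply Finset.sum_pos' (fun j _ => Complex.normSq_nonneg _) ⟨i, Finset.mem_univ i, by
    simpa using Complex.normSq_pos.mpr hi⟩

/-- A Hermitian matrix minus a non-real scalar is invertible. -/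
lemma herm_sub_smul_isUnit_det {B : Matrix m m ℂ} (hB : B.IsHermitian) {z : ℂ}
    (hz : z.im ≠ 0) : IsUnit (B - z • (1 : Matrix m m ℂ)).det := by
  rw [isUnit_iff_ne_zero]
  intro hd
  obtain ⟨v, hv, hmv⟩ := (Matrix.exists_mulVec_eq_zero_iff).mpr hd
  have h1 : star v ⬝ᵥ (B - z • (1 : Matrix m m ℂ)).mulVec v = 0 := by
    rw [hmv, dotProduct_zero]
  rw [sub_mulVec, smul_mulVec, one_mulVec, dotProduct_sub, dotProduct_smul] at h1
  have h2 := congrArg Complex.im h1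
  have hq := herm_quad_conj hB v
  have hqi : (star v ⬝ᵥ B.mulVec v).im = 0 := by
    have := congrArg Complex.im hq
    simp only [Complex.conj_im] at this
    linarith
  have ht := dot_self_re_nonneg v
  have htp := dot_self_pos hv
  simp only [Complex.sub_im, Complex.smul_im, smul_eq_mul, Complex.mul_im, hqi, ht.2,
    Complex.zero_im] at h2
  have : z.im * (star v ⬝ᵥ v).re = 0 := by linarith
  rcases mul_eq_zero.mp this with h | h
  · exact hz h
  · linarith

variable {m : Type*} [Fintype m] [DecidableEq m]

section Resolvent

variable {B : Matrix m m ℂ} {z : ℂ}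

lemma conjTranspose_sub_smul_one (hB : B.IsHermitian) :
    (B - z • (1 : Matrix m m ℂ))ᴴ = B - (starRingEnd ℂ) z • 1 := by
  rw [conjTranspose_sub, hB.eq, conjTranspose_smul, conjTranspose_one]
  rfl

lemma det_conj_isUnit (hB : B.IsHermitian) (hd : IsUnit (B - z • (1 : Matrix m m ℂ)).det) :
    IsUnit ((B - z • (1 : Matrix m m ℂ))ᴴ).det := by
  rw [det_conjTranspose]
  exact hd.star

/-- Imaginary part identity for the resolvent. -/
lemma resolvent_sub_conjTranspose (hB : B.IsHermitian)
    (hd : IsUnit (B - z • (1 : Matrix m m ℂ)).det) :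
    (B - z • 1)⁻¹ - ((B - z • 1)⁻¹)ᴴ
      = (z - (starRingEnd ℂ) z) • ((B - z • 1)⁻¹ * ((B - z • 1)⁻¹)ᴴ) := by
  set M := B - z • (1 : Matrix m m ℂ) with hM
  have hdH : IsUnit Mᴴ.det := det_conj_isUnit hB hd
  have key : M⁻¹ - (Mᴴ)⁻¹ = M⁻¹ * (Mᴴ - M) * (Mᴴ)⁻¹ := by
    rw [Matrix.mul_sub, Matrix.sub_mul, Matrix.mul_assoc, mul_nonsing_inv _ hdH,
      Matrix.mul_one, nonsing_inv_mul _ hd, Matrix.one_mul]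
  have hsub : Mᴴ - M = (z - (starRingEnd ℂ) z) • (1 : Matrix m m ℂ) := by
    rw [hM, conjTranspose_sub_smul_one hB, sub_smul]
    abel
  rw [conjTranspose_nonsing_inv, key, hsub, Matrix.mul_smul, Matrix.mul_one,
    Matrix.smul_mul]

lemma resolvent_normal (hB : B.IsHermitian)
    (hd : IsUnit (B - z • (1 : Matrix m m ℂ)).det) :
    ((B - z • 1)⁻¹)ᴴ * (B - z • 1)⁻¹ = (B - z • 1)⁻¹ * ((B - z • 1)⁻¹)ᴴ := by
  set M := B - z • (1 : Matrix m m ℂ) with hM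
  have hMn : M * Mᴴ = Mᴴ * M := by
    rw [hM, conjTranspose_sub_smul_one hB]
    simp only [Matrix.mul_sub, Matrix.sub_mul, Matrix.mul_smul, Matrix.smul_mul,
      Matrix.one_mul, Matrix.mul_one, smul_sub, smul_smul]
    rw [mul_comm z ((starRingEnd ℂ) z)]
    abel
  rw [conjTranspose_nonsing_inv, ← Matrix.mul_inv_rev, hMn, Matrix.mul_inv_rev,
    ← conjTranspose_nonsing_inv]

end Resolvent

variable {m : Type*} [Fintype m] [DecidableEq m]

/-- conjugate of a sesquilinear form -/
lemma conj_quad (M : Matrix m m ℂ) (v : m → ℂ) :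
    (starRingEnd ℂ) (star v ⬝ᵥ M.mulVec v) = star v ⬝ᵥ Mᴴ.mulVec v := by
  have : (starRingEnd ℂ) (star v ⬝ᵥ M.mulVec v) = star (star v ⬝ᵥ M.mulVec v) := rfl
  rw [this, ← star_dotProduct_star, star_star, star_mulVec, dotProduct_mulVec]

lemma cs_dot {w u : m → ℂ} (h : (star w ⬝ᵥ w).re = (star u ⬝ᵥ u).re) :
    ‖star w ⬝ᵥ u‖ ≤ (star w ⬝ᵥ w).re := by
  set w' : EuclideanSpace ℂ m := (WithLp.equiv 2 _).symm w with hw'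
  set u' : EuclideanSpace ℂ m := (WithLp.equiv 2 _).symm u with hu'
  have h1 : star w ⬝ᵥ u = inner ℂ w' u' := dotProduct_comm _ _
  have h2 : (star w ⬝ᵥ w).re = ‖w'‖ ^ 2 := by
    rw [show star w ⬝ᵥ w = inner ℂ w' w' from dotProduct_comm _ _]
    exact inner_self_eq_norm_sq (𝕜 := ℂ) w'
  have h3 : (star u ⬝ᵥ u).re = ‖u'‖ ^ 2 := by
    rw [show star u ⬝ᵥ u = inner ℂ u' u' from dotProduct_comm _ _]
    exact inner_self_eq_norm_sq (𝕜 := ℂ) u'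
  have hnorm : ‖u'‖ = ‖w'‖ := by
    have : ‖w'‖ ^ 2 = ‖u'‖ ^ 2 := by rw [← h2, ← h3, h]
    nlinarith [norm_nonneg w', norm_nonneg u']
  calc ‖star w ⬝ᵥ u‖ = ‖(inner ℂ w' u' : ℂ)‖ := by
        rw [h1]
    _ ≤ ‖w'‖ * ‖u'‖ := norm_inner_le_norm w' u'
    _ = (star w ⬝ᵥ w).re := by rw [hnorm, ← sq, ← h2]

lemma trace_submatrix_equiv' {o : Type*} [Fintype o] (M : Matrix m m ℂ) (e : o ≃ m) :
    (M.submatrix e e).trace = M.trace := by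
  simp only [Matrix.trace, Matrix.diag, Matrix.submatrix_apply]
  exact Fintype.sum_equiv e _ _ (fun i => rfl)

lemma trace_fromBlocks' {a b : Type*} [Fintype a] [Fintype b]
    (P : Matrix a a ℂ) (Q : Matrix a b ℂ) (R : Matrix b a ℂ) (S : Matrix b b ℂ) :
    (fromBlocks P Q R S).trace = P.trace + S.trace := by
  simp [Matrix.trace, Matrix.diag, Fintype.sum_sum_type, fromBlocks]

lemma trace_unit (T : Matrix Unit Unit ℂ) : T.trace = T () () := by
  simp [Matrix.trace]

lemma unit_matrix_eq (T : Matrix Unit Unit ℂ) : T = T () () • 1 := by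
  ext a b
  rw [show a = () from rfl, show b = () from rfl]
  simp

/-- entry of a 1×1 product sandwich -/
lemma sandwich_entry (c' : m → ℂ) (X : Matrix m m ℂ) :
    ((Matrix.of fun (_ : Unit) j => star (c' j)) * X * (Matrix.of fun i (_ : Unit) => c' i)) () ()
      = star c' ⬝ᵥ X.mulVec c' := by
  simp only [Matrix.mul_apply, Matrix.mulVec, dotProduct, Matrix.of_apply, Pi.star_apply,
    Finset.sum_mul, Finset.mul_sum]
  rw [Finset.sum_comm]
  exact Finset.sum_congr rfl fun i _ => Finset.sum_congr rfl fun j _ => by ring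

/-- Trace of resolvent of a minor: for a Hermitian (n+1)×(n+1) matrix A with n+1 ≥ 2,
    removing the k-th row and column changes the trace of the resolvent by at most 1/v,
    where v = Im z > 0. -/
theorem trace_resolvent_minor (n : ℕ) (hn : 1 ≤ n)
    (A : Matrix (Fin (n + 1)) (Fin (n + 1)) ℂ) (hA : A.IsHermitian)
    (k : Fin (n + 1)) (z : ℂ) (hz : 0 < z.im) :
    ‖(((A - z • (1 : Matrix (Fin (n + 1)) (Fin (n + 1)) ℂ))⁻¹).trace
        - ((A.submatrix k.succAbove k.succAbove
              - z • (1 : Matrix (Fin n) (Fin n) ℂ))⁻¹).trace)‖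
      ≤ 1 / z.im := by
  have hzne : z.im ≠ 0 := ne_of_gt hz
  set B := A.submatrix k.succAbove k.succAbove with hBdef
  have hB : B.IsHermitian := hA.submatrix _
  have hdetB : IsUnit (B - z • (1 : Matrix (Fin n) (Fin n) ℂ)).det :=
    herm_sub_smul_isUnit_det hB hzne
  haveI iH : Invertible (B - z • (1 : Matrix (Fin n) (Fin n) ℂ)) :=
    (B - z • 1).invertibleOfIsUnitDet hdetB
  set G := (B - z • (1 : Matrix (Fin n) (Fin n) ℂ))⁻¹ with hG
  have hinvH : ⅟(B - z • (1 : Matrix (Fin n) (Fin n) ℂ)) = G := invOf_eq_nonsing_inv _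
  set c' : Fin n → ℂ := fun i => A (k.succAbove i) k with hc'
  -- vectors and quadratic quantities
  set w := Gᴴ.mulVec c' with hw
  set u := G.mulVec c' with hu
  set β : ℝ := (star w ⬝ᵥ w).re with hβ
  have hβnn : 0 ≤ β := (dot_self_re_nonneg w).1
  have him_w : (star w ⬝ᵥ w).im = 0 := (dot_self_re_nonneg w).2
  have hstarw : star w = Matrix.vecMul (star c') G := by
    rw [hw, star_mulVec, conjTranspose_conjTranspose]
  have hstaru : star u = Matrix.vecMul (star c') Gᴴ := by
    rw [hu, star_mulVec]
  have hF1 : star c' ⬝ᵥ (G * Gᴴ).mulVec c' = star w ⬝ᵥ w := by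
    rw [← mulVec_mulVec, dotProduct_mulVec, ← hstarw, ← hw]
  set α := star c' ⬝ᵥ G.mulVec c' with hα
  have hGsub : G - Gᴴ = (z - (starRingEnd ℂ) z) • (G * Gᴴ) :=
    resolvent_sub_conjTranspose hB hdetB
  have hconjα : (starRingEnd ℂ) α = star c' ⬝ᵥ Gᴴ.mulVec c' := conj_quad _ _
  have hsub2 : α - (starRingEnd ℂ) α = (z - (starRingEnd ℂ) z) * (star w ⬝ᵥ w) := by
    rw [hconjα, hα, ← dotProduct_sub, ← sub_mulVec, hGsub, smul_mulVec,
      dotProduct_smul, smul_eq_mul, hF1]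
  have hαim : α.im = z.im * β := by
    have h2 := congrArg Complex.im hsub2
    simp only [Complex.sub_im, Complex.conj_im, Complex.mul_im, Complex.sub_re,
      Complex.conj_re, him_w, mul_zero, zero_add, sub_self, sub_neg_eq_add] at h2
    rw [hβ]
    linarith
  have hF3 : (star u ⬝ᵥ u).re = β := by
    have h4 : star u ⬝ᵥ u = star c' ⬝ᵥ (Gᴴ * G).mulVec c' := by
      calc star u ⬝ᵥ u = (star c' ᵥ* Gᴴ) ⬝ᵥ u := by rw [hstaru]
        _ = star c' ⬝ᵥ Gᴴ.mulVec u := (dotProduct_mulVec _ _ _).symm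
        _ = star c' ⬝ᵥ (Gᴴ * G).mulVec c' := by rw [hu, mulVec_mulVec]
    rw [h4, resolvent_normal hB hdetB, hF1, hβ]
  have hF4 : star c' ⬝ᵥ (G * G).mulVec c' = star w ⬝ᵥ u := by
    rw [← mulVec_mulVec, dotProduct_mulVec, ← hstarw, ← hu]
  have hF5 : ‖star w ⬝ᵥ u‖ ≤ β := by
    have := cs_dot (w := w) (u := u) (by rw [hF3])
    rwa [← hβ] at this
  -- the Schur complement scalar
  have hsand : (((Matrix.of fun (_ : Unit) j => star (c' j)) : Matrix Unit (Fin n) ℂ)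
      * ⅟(B - z • (1 : Matrix (Fin n) (Fin n) ℂ))
      * ((Matrix.of fun i (_ : Unit) => c' i) : Matrix (Fin n) Unit ℂ)) () () = α := by
    rw [hinvH]; exact sandwich_entry c' G
  have hAkk : (A k k).im = 0 := by
    have h5 : (starRingEnd ℂ) (A k k) = A k k := by
      have := congrFun (congrFun hA.eq k) k
      simpa [Matrix.conjTranspose_apply] using this
    exact Complex.conj_eq_iff_im.mp h5
  have hs0ne' : A k k - z - α ≠ 0 := by
    intro h
    have h8 : (A k k - z - α).im = 0 := by rw [h]; rfl
    simp only [Complex.sub_im, hAkk, hαim] at h8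
    nlinarith
  have hs0im' : (A k k - z - α).im = -(z.im * (1 + β)) := by
    simp only [Complex.sub_im, hAkk, hαim]
    ring
  have hs0 : ((((Matrix.of fun (_ : Unit) (_ : Unit) => A k k) : Matrix Unit Unit ℂ)
          - z • (1 : Matrix Unit Unit ℂ))
      - ((Matrix.of fun (_ : Unit) j => star (c' j)) : Matrix Unit (Fin n) ℂ)
        * ⅟(B - z • (1 : Matrix (Fin n) (Fin n) ℂ))
        * ((Matrix.of fun i (_ : Unit) => c' i) : Matrix (Fin n) Unit ℂ)) () () = A k k - z - α := by
    simp only [Matrix.sub_apply, Matrix.smul_apply, Matrix.one_apply_eq, Matrix.of_apply,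
      smul_eq_mul, mul_one]
    rw [hsand]
  have hs0ne : ((((Matrix.of fun (_ : Unit) (_ : Unit) => A k k) : Matrix Unit Unit ℂ)
          - z • (1 : Matrix Unit Unit ℂ))
      - ((Matrix.of fun (_ : Unit) j => star (c' j)) : Matrix Unit (Fin n) ℂ)
        * ⅟(B - z • (1 : Matrix (Fin n) (Fin n) ℂ))
        * ((Matrix.of fun i (_ : Unit) => c' i) : Matrix (Fin n) Unit ℂ)) () () ≠ 0 := by rw [hs0]; exact hs0ne'
  haveI iS : Invertible ((((Matrix.of fun (_ : Unit) (_ : Unit) => A k k) : Matrix Unit Unit ℂ)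
          - z • (1 : Matrix Unit Unit ℂ))
      - ((Matrix.of fun (_ : Unit) j => star (c' j)) : Matrix Unit (Fin n) ℂ)
        * ⅟(B - z • (1 : Matrix (Fin n) (Fin n) ℂ))
        * ((Matrix.of fun i (_ : Unit) => c' i) : Matrix (Fin n) Unit ℂ)) := Matrix.invertibleOfIsUnitDet _
    (by rw [Matrix.det_unique]; exact isUnit_iff_ne_zero.mpr hs0ne)
  have hinvS : ⅟((((Matrix.of fun (_ : Unit) (_ : Unit) => A k k) : Matrix Unit Unit ℂ)
          - z • (1 : Matrix Unit Unit ℂ))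
      - ((Matrix.of fun (_ : Unit) j => star (c' j)) : Matrix Unit (Fin n) ℂ)
        * ⅟(B - z • (1 : Matrix (Fin n) (Fin n) ℂ))
        * ((Matrix.of fun i (_ : Unit) => c' i) : Matrix (Fin n) Unit ℂ)) = (((((Matrix.of fun (_ : Unit) (_ : Unit) => A k k) : Matrix Unit Unit ℂ)
          - z • (1 : Matrix Unit Unit ℂ))
      - ((Matrix.of fun (_ : Unit) j => star (c' j)) : Matrix Unit (Fin n) ℂ)
        * ⅟(B - z • (1 : Matrix (Fin n) (Fin n) ℂ))
        * ((Matrix.of fun i (_ : Unit) => c' i) : Matrix (Fin n) Unit ℂ)) () ())⁻¹ • (1 : Matrix Unit Unit ℂ) := by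
    apply invOf_eq_right_inv
    nth_rewrite 1 [unit_matrix_eq ((((Matrix.of fun (_ : Unit) (_ : Unit) => A k k) : Matrix Unit Unit ℂ)
          - z • (1 : Matrix Unit Unit ℂ))
      - ((Matrix.of fun (_ : Unit) j => star (c' j)) : Matrix Unit (Fin n) ℂ)
        * ⅟(B - z • (1 : Matrix (Fin n) (Fin n) ℂ))
        * ((Matrix.of fun i (_ : Unit) => c' i) : Matrix (Fin n) Unit ℂ))]
    rw [Matrix.smul_mul, Matrix.mul_smul, Matrix.one_mul, smul_smul,
      mul_inv_cancel₀ hs0ne, one_smul]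
  -- block structure
  set e : Fin n ⊕ Unit ≃ Fin (n + 1) :=
    (Equiv.optionEquivSumPUnit (Fin n)).symm.trans (finSuccEquiv' k).symm with he
  have he1 : ∀ i, e (Sum.inl i) = k.succAbove i := fun i => by
    simp [he, finSuccEquiv'_symm_some]
  have he2 : ∀ x, e (Sum.inr x) = k := fun x => by
    simp [he, finSuccEquiv'_symm_none]
  have hblock : (A - z • (1 : Matrix (Fin (n + 1)) (Fin (n + 1)) ℂ)).submatrix e e
      = fromBlocks (B - z • 1)
        ((Matrix.of fun i (_ : Unit) => c' i) : Matrix (Fin n) Unit ℂ)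
        ((Matrix.of fun (_ : Unit) j => star (c' j)) : Matrix Unit (Fin n) ℂ)
        (((Matrix.of fun (_ : Unit) (_ : Unit) => A k k) : Matrix Unit Unit ℂ)
          - z • (1 : Matrix Unit Unit ℂ)) := by
    ext x y
    cases x with
    | inl i =>
      cases y with
      | inl j =>
        simp only [Matrix.submatrix_apply, he1, fromBlocks_apply₁₁, Matrix.sub_apply,
          Matrix.smul_apply, Matrix.one_apply, hBdef, Matrix.submatrix_apply, smul_eq_mul,
          Fin.succAbove_right_injective.eq_iff]
      | inr x' =>
        simp only [Matrix.submatrix_apply, he1, he2, fromBlocks_apply₁₂, Matrix.sub_apply,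
          Matrix.smul_apply, Matrix.one_apply, Matrix.of_apply, hc', smul_eq_mul]
        rw [if_neg (Fin.succAbove_ne k i)]
        ring
    | inr x' =>
      cases y with
      | inl j =>
        simp only [Matrix.submatrix_apply, he1, he2, fromBlocks_apply₂₁, Matrix.sub_apply,
          Matrix.smul_apply, Matrix.one_apply, Matrix.of_apply, hc', smul_eq_mul]
        rw [if_neg (Fin.ne_succAbove k j)]
        have h6 : A k (k.succAbove j) = star (A (k.succAbove j) k) := by
          have := congrFun (congrFun hA.eq k) (k.succAbove j)
          simp only [Matrix.conjTranspose_apply] at this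
          exact this.symm
        rw [h6]
        ring
      | inr y' =>
        simp only [Matrix.submatrix_apply, he2, fromBlocks_apply₂₂, Matrix.sub_apply,
          Matrix.smul_apply, Matrix.one_apply, Matrix.of_apply, smul_eq_mul, if_pos rfl]
  haveI iF : Invertible (fromBlocks (B - z • 1)
        ((Matrix.of fun i (_ : Unit) => c' i) : Matrix (Fin n) Unit ℂ)
        ((Matrix.of fun (_ : Unit) j => star (c' j)) : Matrix Unit (Fin n) ℂ)
        (((Matrix.of fun (_ : Unit) (_ : Unit) => A k k) : Matrix Unit Unit ℂ)
          - z • (1 : Matrix Unit Unit ℂ))) :=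
    fromBlocks₁₁Invertible _ _ _ _
  have htr1 : ((fromBlocks (B - z • 1) ((Matrix.of fun i (_ : Unit) => c' i) : Matrix (Fin n) Unit ℂ) ((Matrix.of fun (_ : Unit) j => star (c' j)) : Matrix Unit (Fin n) ℂ) (((Matrix.of fun (_ : Unit) (_ : Unit) => A k k) : Matrix Unit Unit ℂ)
          - z • (1 : Matrix Unit Unit ℂ)))⁻¹).trace
      = ((A - z • (1 : Matrix (Fin (n + 1)) (Fin (n + 1)) ℂ))⁻¹).trace := by
    rw [← hblock, Matrix.inv_submatrix_equiv, trace_submatrix_equiv']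
  have hFinv := invOf_fromBlocks₁₁_eq (B - z • 1) ((Matrix.of fun i (_ : Unit) => c' i) : Matrix (Fin n) Unit ℂ) ((Matrix.of fun (_ : Unit) j => star (c' j)) : Matrix Unit (Fin n) ℂ) (((Matrix.of fun (_ : Unit) (_ : Unit) => A k k) : Matrix Unit Unit ℂ)
          - z • (1 : Matrix Unit Unit ℂ))
  have hassoc : (((Matrix.of fun (_ : Unit) j => star (c' j)) : Matrix Unit (Fin n) ℂ) * G) * (G * ((Matrix.of fun i (_ : Unit) => c' i) : Matrix (Fin n) Unit ℂ)) = ((Matrix.of fun (_ : Unit) j => star (c' j)) : Matrix Unit (Fin n) ℂ) * (G * G) * ((Matrix.of fun i (_ : Unit) => c' i) : Matrix (Fin n) Unit ℂ) := by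
    rw [Matrix.mul_assoc ((Matrix.of fun (_ : Unit) j => star (c' j)) : Matrix Unit (Fin n) ℂ) G, ← Matrix.mul_assoc G G, ← Matrix.mul_assoc ((Matrix.of fun (_ : Unit) j => star (c' j)) : Matrix Unit (Fin n) ℂ)]
  have hmid : (G * ((Matrix.of fun i (_ : Unit) => c' i) : Matrix (Fin n) Unit ℂ) * ((A k k - z - α)⁻¹ • (1 : Matrix Unit Unit ℂ)) * ((Matrix.of fun (_ : Unit) j => star (c' j)) : Matrix Unit (Fin n) ℂ) * G).trace
      = (A k k - z - α)⁻¹ * (star w ⬝ᵥ u) := by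
    rw [Matrix.mul_smul, Matrix.mul_one, Matrix.smul_mul, Matrix.smul_mul, Matrix.trace_smul,
      Matrix.mul_assoc (G * ((Matrix.of fun i (_ : Unit) => c' i) : Matrix (Fin n) Unit ℂ)) ((Matrix.of fun (_ : Unit) j => star (c' j)) : Matrix Unit (Fin n) ℂ) G, Matrix.trace_mul_comm (G * ((Matrix.of fun i (_ : Unit) => c' i) : Matrix (Fin n) Unit ℂ)) (((Matrix.of fun (_ : Unit) j => star (c' j)) : Matrix Unit (Fin n) ℂ) * G),
      trace_unit, hassoc, sandwich_entry c' (G * G), hF4, smul_eq_mul]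
  have hkey : ((A - z • (1 : Matrix (Fin (n + 1)) (Fin (n + 1)) ℂ))⁻¹).trace - G.trace
      = (A k k - z - α)⁻¹ * (star w ⬝ᵥ u + 1) := by
    rw [← htr1, ← invOf_eq_nonsing_inv, hFinv, hinvS, hs0, trace_fromBlocks',
      Matrix.trace_add, hinvH, hmid, Matrix.trace_smul, Matrix.trace_one, smul_eq_mul, Fintype.card_unit, Nat.cast_one, mul_one]
    ring
  rw [hkey]
  have h1β : (0:ℝ) < 1 + β := by linarith
  have habs_s0 : z.im * (1 + β) ≤ ‖A k k - z - α‖ := by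
    have h7 := Complex.abs_im_le_norm (A k k - z - α)
    rw [hs0im', abs_neg, abs_of_nonneg (by positivity)] at h7
    exact h7
  have habs_num : ‖star w ⬝ᵥ u + 1‖ ≤ 1 + β := by
    calc ‖star w ⬝ᵥ u + 1‖
        ≤ ‖star w ⬝ᵥ u‖ + ‖(1:ℂ)‖ := norm_add_le _ _
      _ ≤ 1 + β := by rw [norm_one]; linarith [hF5]
  have habs_pos : 0 < ‖A k k - z - α‖ := norm_pos_iff.mpr hs0ne'
  rw [norm_mul, norm_inv]
  calc (‖A k k - z - α‖)⁻¹ * ‖star w ⬝ᵥ u + 1‖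
      ≤ (z.im * (1 + β))⁻¹ * (1 + β) := by
        apply mul_le_mul _ habs_num (norm_nonneg _) (by positivity)
        exact inv_anti₀ (by positivity) habs_s0
    _ = 1 / z.im := by field_simp
end
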